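/- Suppose a projection step yields ‖P(V - L*)‖ ≤ δ₁‖V - L*‖ + c where δ₁ ∈ [0,1), c ≥ 0, and additionally ‖V - L*‖² = ‖P(V - L*)‖² + r² where r = ‖P^⊥(V - L*)‖. Then ‖V - L*‖ ≤ r/√(1-δ₁²) + (1+2δ₁)/(1-δ₁²) · c. -/

import Mathlib

/-!
Write `a = ‖V - L*‖`, `p = ‖P(V - L*)‖`, `r = ‖P^⊥(V - L*)‖` and `s = √(1 - δ²)`.
Squaring `p ≤ δ a + c` and using `a² = p² + r²` gives the quadratic inequality
`s² a² ≤ 2 δ c a + (c + r)²`. Its largest root `(δ c + √(δ²c² + s²(c + r)²)) / s²` is at most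
`(2 δ c + s (c + r)) / s² ≤ ((1 + 2δ) c + s r) / s²`, which is the claimed bound.
-/

lemma mul_le_two_mul_add_sqrt_mul_of_mul_sq_le {q a b e : ℝ} (hq : 0 < q) (hb : 0 ≤ b)
    (he : 0 ≤ e) (h : q * a ^ 2 ≤ 2 * b * a + e ^ 2) : q * a ≤ 2 * b + √q * e := by
  have hsq : √q ^ 2 = q := Real.sq_sqrt hq.le
  have hs : 0 ≤ √q * e := mul_nonneg (Real.sqrt_nonneg q) he
  by_contra! hlt
  -- `t = q a` satisfies `t² ≤ 2 b t + q e²`, impossible once `t > 2 b + √q e ≥ √q e`.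
  have ht : (q * a) ^ 2 ≤ 2 * b * (q * a) + (√q * e) ^ 2 := by
    nlinarith [mul_le_mul_of_nonneg_left h hq.le]
  nlinarith [mul_le_mul_of_nonneg_left hlt.le (hs.trans (by linarith : √q * e ≤ q * a))]

lemma le_div_sqrt_add_mul_of_sq_eq_add_sq {a p r δ c : ℝ} (hp : 0 ≤ p) (hr : 0 ≤ r)
    (hδ0 : 0 ≤ δ) (hδ1 : δ < 1) (hc : 0 ≤ c)
    (hpyth : a ^ 2 = p ^ 2 + r ^ 2) (hproj : p ≤ δ * a + c) :
    a ≤ r / √(1 - δ ^ 2) + (1 + 2 * δ) / (1 - δ ^ 2) * c := by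
  have hq : 0 < 1 - δ ^ 2 := by nlinarith
  have hs : 0 < √(1 - δ ^ 2) := Real.sqrt_pos.mpr hq
  have hs1 : √(1 - δ ^ 2) ≤ 1 := Real.sqrt_le_one.mpr (by nlinarith)
  have hquad : (1 - δ ^ 2) * a ^ 2 ≤ 2 * (δ * c) * a + (c + r) ^ 2 := by
    nlinarith [pow_le_pow_left₀ hp hproj 2, mul_nonneg hc hr]
  have hroot := mul_le_two_mul_add_sqrt_mul_of_mul_sq_le hq (mul_nonneg hδ0 hc)
    (add_nonneg hc hr) hquad
  have hnum : (1 - δ ^ 2) * a ≤ √(1 - δ ^ 2) * r + (1 + 2 * δ) * c := by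
    nlinarith [mul_le_mul_of_nonneg_right hs1 hc]
  calc a ≤ (√(1 - δ ^ 2) * r + (1 + 2 * δ) * c) / (1 - δ ^ 2) := by
        rwa [le_div_iff₀ hq, mul_comm]
    _ = r / √(1 - δ ^ 2) + (1 + 2 * δ) / (1 - δ ^ 2) * c := by
        have hs2 : √(1 - δ ^ 2) ^ 2 = 1 - δ ^ 2 := Real.sq_sqrt hq.le
        field_simp
        linear_combination r * hs2

theorem stmt_16 {F : Type*} [NormedAddCommGroup F] [InnerProductSpace ℝ F]
    (K : Submodule ℝ F) [CompleteSpace K] (V Lstar : F)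
    (δ₁ c : ℝ) (hδ0 : 0 ≤ δ₁) (hδ1 : δ₁ < 1) (hc : 0 ≤ c)
    (hproj : ‖(K.orthogonalProjectionOnto (V - Lstar) : F)‖ ≤ δ₁ * ‖V - Lstar‖ + c) :
    ‖V - Lstar‖ ≤
      ‖(V - Lstar) - (K.orthogonalProjectionOnto (V - Lstar) : F)‖ / Real.sqrt (1 - δ₁ ^ 2)
      + (1 + 2 * δ₁) / (1 - δ₁ ^ 2) * c := by
  have hpyth := K.norm_sq_eq_add_norm_sq_starProjection (V - Lstar)
  rw [Submodule.starProjection_orthogonal_val] at hpyth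
  exact le_div_sqrt_add_mul_of_sq_eq_add_sq (norm_nonneg _) (norm_nonneg _) hδ0 hδ1 hc
    hpyth hproj
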